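/- Let $(\alpha_n)$ be a sequence with $\alpha_n \in (c,c')$, $\beta_k^n = \alpha_k\cdots\alpha_{k+n-1}$, $d_n = \inf_k\beta_k^n$, and $S_k = \sum_{n=1}^\infty(\beta_k^n)^{-1}$. If $S_k \leq M$ for all $k\geq 1$ and some $M > 0$, then for all $k, n \geq 1$, $(\beta_k^n)^{-1} \leq M\cdot\left(\frac{M}{1+M}\right)^{n-1}$, and in particular $\limsup_{n\to\infty}(d_n)^{-1/n} \leq \frac{M}{1+M} < 1$. -/

import Mathlib

/-!
Since `β_k^{n+1} = α_k β_{k+1}^n`, the sums satisfy `S_k = α_k⁻¹ (1 + S_{k+1})`. As `S_{k+1} ≤ M`,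
this forces `α_k⁻¹ ≥ S_k / (1 + M)`, so peeling off the first factor contracts by `M / (1 + M)`:
`α_k⁻¹ S_{k+1} = S_k - α_k⁻¹ ≤ S_k · M / (1 + M)`. Iterating from `(β_k^1)⁻¹ = α_k⁻¹ ≤ S_k ≤ M`
gives the geometric bound, which passes to `d_n` uniformly in `k` and then to the `n`-th roots.
-/

open Filter Finset

/-- `beta α k n = α_k ⋯ α_{k+n-1}`. -/
noncomputable def beta (α : ℕ → ℝ) (k n : ℕ) : ℝ := ∏ j ∈ Finset.range n, α (k + j)

/-- `d_n = inf_k β_k^n`. -/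
noncomputable def dseq (α : ℕ → ℝ) (n : ℕ) : ℝ := ⨅ k, beta α k n

/-- `S_k = ∑_{n ≥ 1} (β_k^n)⁻¹`. -/
noncomputable def Sseq (α : ℕ → ℝ) (k : ℕ) : ℝ := ∑' n, (beta α k (n + 1))⁻¹

theorem limsup_rpow_inv_le_of_le_mul_pow {u : ℕ → ℝ} {C r : ℝ} (hu : ∀ n, 0 ≤ u n)
    (hC : 0 < C) (hr : 0 ≤ r) (h : ∀ᶠ n in atTop, u n ≤ C * r ^ n) :
    limsup (fun n : ℕ => u n ^ (n : ℝ)⁻¹) atTop ≤ r := by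
  have hroot : Tendsto (fun n : ℕ => C ^ (n : ℝ)⁻¹ * r) atTop (nhds r) := by
    have hC_root : Tendsto (fun n : ℕ => C ^ (n : ℝ)⁻¹) atTop (nhds 1) := by
      simpa using tendsto_const_nhds.rpow tendsto_inv_atTop_nhds_zero_nat (Or.inl hC.ne')
    simpa using hC_root.mul_const r
  have hle : ∀ᶠ n : ℕ in atTop, u n ^ (n : ℝ)⁻¹ ≤ C ^ (n : ℝ)⁻¹ * r := by
    filter_upwards [h, eventually_ne_atTop 0] with n hn hn0
    calc u n ^ (n : ℝ)⁻¹ ≤ (C * r ^ n) ^ (n : ℝ)⁻¹ := by gcongr; exact hu n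
      _ = C ^ (n : ℝ)⁻¹ * r := by
        rw [Real.mul_rpow hC.le (by positivity), Real.pow_rpow_inv_natCast hr hn0]
  have hcobdd : IsCoboundedUnder (· ≤ ·) atTop (fun n : ℕ => u n ^ (n : ℝ)⁻¹) :=
    isCoboundedUnder_le_of_le atTop fun n => Real.rpow_nonneg (hu n) _
  exact (limsup_le_limsup hle hcobdd hroot.isBoundedUnder_le).trans_eq hroot.limsup_eq

section Products

variable {α : ℕ → ℝ}

theorem beta_pos (hα : ∀ n, 0 < α n) (k n : ℕ) : 0 < beta α k n :=
  prod_pos fun j _ => hα (k + j)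

theorem beta_one (k : ℕ) : beta α k 1 = α k := by
  simp [beta]

theorem beta_succ (k n : ℕ) : beta α k (n + 1) = α k * beta α (k + 1) n := by
  simp only [beta, prod_range_succ', add_zero]
  rw [mul_comm]
  congr 1
  exact prod_congr rfl fun j _ => by rw [add_right_comm, add_assoc]

theorem Sseq_nonneg (hα : ∀ n, 0 < α n) (k : ℕ) : 0 ≤ Sseq α k :=
  tsum_nonneg fun n => inv_nonneg.2 (beta_pos hα k (n + 1)).le

theorem Sseq_eq_inv_mul_one_add {k : ℕ}
    (hsum : Summable fun n => (beta α (k + 1) (n + 1))⁻¹) :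
    Sseq α k = (α k)⁻¹ * (1 + Sseq α (k + 1)) := by
  have hsum' : Summable fun n => (beta α (k + 1) n)⁻¹ := (summable_nat_add_iff 1).1 hsum
  simp only [Sseq, beta_succ k, mul_inv]
  rw [tsum_mul_left, hsum'.tsum_eq_zero_add]
  simp [beta]

theorem inv_le_Sseq (hα : ∀ n, 0 < α n) {k : ℕ}
    (hsum : Summable fun n => (beta α (k + 1) (n + 1))⁻¹) : (α k)⁻¹ ≤ Sseq α k := by
  rw [Sseq_eq_inv_mul_one_add hsum]
  exact le_mul_of_one_le_right (inv_pos.2 (hα k)).le (by linarith [Sseq_nonneg hα (k + 1)])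

theorem inv_mul_Sseq_succ_le (hα : ∀ n, 0 < α n) {k : ℕ} {M : ℝ}
    (hsum : Summable fun n => (beta α (k + 1) (n + 1))⁻¹) (hM : Sseq α (k + 1) ≤ M) :
    (α k)⁻¹ * Sseq α (k + 1) ≤ Sseq α k * (M / (1 + M)) := by
  have hS := Sseq_nonneg hα (k + 1)
  have ha : 0 ≤ (α k)⁻¹ := (inv_pos.2 (hα k)).le
  rw [Sseq_eq_inv_mul_one_add hsum, mul_assoc]
  gcongr
  rw [mul_div_assoc', le_div_iff₀ (by linarith)]
  linarith

theorem inv_beta_succ_le_Sseq_mul_pow (hα : ∀ n, 0 < α n)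
    (hsum : ∀ k, Summable fun n => (beta α k (n + 1))⁻¹) {M : ℝ}
    (hSM : ∀ k, Sseq α k ≤ M) (n k : ℕ) :
    (beta α k (n + 1))⁻¹ ≤ Sseq α k * (M / (1 + M)) ^ n := by
  have hM : 0 ≤ M := (Sseq_nonneg hα 0).trans (hSM 0)
  induction n generalizing k with
  | zero => simpa [beta_one] using inv_le_Sseq hα (hsum (k + 1))
  | succ n ih =>
    calc (beta α k (n + 1 + 1))⁻¹ = (α k)⁻¹ * (beta α (k + 1) (n + 1))⁻¹ := by
          rw [beta_succ k (n + 1), mul_inv]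
      _ ≤ (α k)⁻¹ * Sseq α (k + 1) * (M / (1 + M)) ^ n := by
          rw [mul_assoc]; exact mul_le_mul_of_nonneg_left (ih (k + 1)) (inv_pos.2 (hα k)).le
      _ ≤ Sseq α k * (M / (1 + M)) * (M / (1 + M)) ^ n := by
          have := inv_mul_Sseq_succ_le hα (hsum (k + 1)) (hSM (k + 1))
          gcongr
      _ = Sseq α k * (M / (1 + M)) ^ (n + 1) := by ring

theorem dseq_nonneg (hα : ∀ n, 0 < α n) (n : ℕ) : 0 ≤ dseq α n :=
  le_ciInf fun k => (beta_pos hα k n).le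

theorem inv_dseq_le (hα : ∀ n, 0 < α n) {n : ℕ} {B : ℝ} (hB : ∀ k, (beta α k n)⁻¹ ≤ B) :
    (dseq α n)⁻¹ ≤ B := by
  have hB0 : 0 < B := (inv_pos.2 (beta_pos hα 0 n)).trans_le (hB 0)
  have hd : B⁻¹ ≤ dseq α n :=
    le_ciInf fun k => (inv_le_comm₀ hB0 (beta_pos hα k n)).2 (hB k)
  exact (inv_le_comm₀ (hd.trans_lt' (inv_pos.2 hB0)) hB0).2 hd

end Products

theorem stmt2_general (c c' : ℝ) (α : ℕ → ℝ) (hc : 0 < c)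
    (hα : ∀ n, α n ∈ Set.Ioo c c')
    (hsum : ∀ k, Summable fun n => (beta α k (n + 1))⁻¹)
    (M : ℝ) (hM : 0 < M) (hSM : ∀ k, Sseq α k ≤ M) :
    (∀ k n : ℕ, (beta α k (n + 1))⁻¹ ≤ M * (M / (1 + M)) ^ n) ∧
      Filter.limsup (fun n : ℕ => (dseq α n)⁻¹ ^ ((n : ℝ)⁻¹)) Filter.atTop ≤ M / (1 + M) ∧
      M / (1 + M) < 1 := by
  have hα0 : ∀ n, 0 < α n := fun n => hc.trans (hα n).1
  have hbound : ∀ k n : ℕ, (beta α k (n + 1))⁻¹ ≤ M * (M / (1 + M)) ^ n := fun k n =>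
    (inv_beta_succ_le_Sseq_mul_pow hα0 hsum hSM n k).trans (by gcongr; exact hSM k)
  refine ⟨hbound, ?_, (div_lt_one (by linarith)).2 (by linarith)⟩
  refine limsup_rpow_inv_le_of_le_mul_pow (C := 1 + M)
    (fun n => inv_nonneg.2 (dseq_nonneg hα0 n)) (by positivity) (by positivity) ?_
  filter_upwards [eventually_ge_atTop 1] with n hn
  obtain ⟨m, rfl⟩ := Nat.exists_eq_add_of_le' hn
  refine inv_dseq_le hα0 fun k => (hbound k m).trans_eq ?_
  have h1M : 1 + M ≠ 0 := by positivity
  rw [pow_succ]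
  field_simp

theorem stmt2 (c c' : ℝ) (α : ℕ → ℝ) (hc : 0 < c) (hcc : c < c')
    (hα : ∀ n, α n ∈ Set.Ioo c c')
    (hsum : ∀ k, Summable fun n => (beta α k (n + 1))⁻¹)
    (M : ℝ) (hM : 0 < M) (hSM : ∀ k, Sseq α k ≤ M) :
    (∀ k n : ℕ, (beta α k (n + 1))⁻¹ ≤ M * (M / (1 + M)) ^ n) ∧
      Filter.limsup (fun n : ℕ => (dseq α n)⁻¹ ^ ((n : ℝ)⁻¹)) Filter.atTop ≤ M / (1 + M) ∧
      M / (1 + M) < 1 :=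
  stmt2_general c c' α hc hα hsum M hM hSM
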